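/- For a finite hypothesis class H, the following are equivalent: (1) List(H) ≤ L; (2) for every ε > 0 there exist δ > 0 and a coloring D ↦ h_D assigning to each H-realizable distribution D ∈ Δ(H) a predictor h_D, such that L_D(h_D) ≤ ε for every D ∈ Δ(H), and for every D ∈ Δ(H) the set {h_{D'} : D' ∈ Δ(H), TV(D, D') ≤ δ} has at most L elements. -/

import Mathlib

open scoped ENNReal

namespace Replicability

variable {X : Type*}

/-- A labeled sample of size `n`: `n` pairs of a domain point and a boolean label
(`true` encodes `+1` and `false` encodes `-1`). -/
abbrev Sample (X : Type*) (n : ℕ) := Fin n → X × Bool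

/-- A (possibly randomized) learning rule: for every sample size `n` it maps a sample of
size `n` to a probability distribution over output predictors `X → Bool`. -/
abbrev LearningRule (X : Type*) := (n : ℕ) → Sample X n → PMF (X → Bool)

/-- The population loss `L_D(h) = Pr_{(x,y) ~ D}[h x ≠ y]` of a predictor `h` with
respect to a distribution `D` over labeled examples. -/
noncomputable def popLoss (D : PMF (X × Bool)) (h : X → Bool) : ℝ≥0∞ :=
  D.toOuterMeasure {p | h p.1 ≠ p.2}

/-- `D` is realizable by the hypothesis class `H`: `inf_{h ∈ H} L_D(h) = 0`. -/
def Realizable (H : Set (X → Bool)) (D : PMF (X × Bool)) : Prop :=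
  ∀ ε : ℝ≥0∞, 0 < ε → ∃ h ∈ H, popLoss D h < ε

/-- The probability that, for an i.i.d. sample `S ~ D^n`, the (random) output of the
learning rule `A` on `S` lands in the set `E` of predictors. -/
noncomputable def outProb (D : PMF (X × Bool)) {n : ℕ}
    (A : Sample X n → PMF (X → Bool)) (E : Set (X → Bool)) : ℝ≥0∞ :=
  ∑' S : Sample X n, (∏ i, D (S i)) * (A S).toOuterMeasure E

/-- `A` is an `(ε, ρ)`-globally stable learner for `H`: there is a sample size `n` such
that for every `H`-realizable `D` some predictor `h` with `L_D(h) ≤ ε` is output with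
probability at least `ρ`. -/
def IsGSLearner (H : Set (X → Bool)) (A : LearningRule X) (ε ρ : ℝ) : Prop :=
  ∃ n : ℕ, ∀ D : PMF (X × Bool), Realizable H D →
    ∃ h : X → Bool, popLoss D h ≤ ENNReal.ofReal ε ∧
      ENNReal.ofReal ρ ≤ outProb D (A n) {h}

/-- The global stability parameter `ρ(H)`. -/
noncomputable def globalStability (H : Set (X → Bool)) : ℝ :=
  sSup {ρ : ℝ | ρ ∈ Set.Icc (0 : ℝ) 1 ∧
    ∀ ε : ℝ, 0 < ε → ∃ A : LearningRule X, IsGSLearner H A ε ρ}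

/-- The global stability parameter `ρ_F(H)` of `H` with respect to the output class `F`:
only learners all of whose outputs lie in `F` are considered. -/
noncomputable def globalStabilityIn (F H : Set (X → Bool)) : ℝ :=
  sSup {ρ : ℝ | ρ ∈ Set.Icc (0 : ℝ) 1 ∧
    ∀ ε : ℝ, 0 < ε → ∃ A : LearningRule X,
      (∀ n S, (A n S).support ⊆ F) ∧ IsGSLearner H A ε ρ}

/-- `A` is an `(ε, L)`-list replicable learner for `H`: for every `δ > 0` there is a
sample size `n` such that for every `H`-realizable `D` there are predictors
`h_1, …, h_L`, each of population loss at most `ε`, such that the output of `A` is one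
of them with probability at least `1 - δ`. -/
def IsListLearner (H : Set (X → Bool)) (A : LearningRule X) (ε : ℝ) (L : ℕ) : Prop :=
  ∀ δ : ℝ, 0 < δ → ∃ n : ℕ, ∀ D : PMF (X × Bool), Realizable H D →
    ∃ hs : Fin L → (X → Bool),
      (∀ ℓ, popLoss D (hs ℓ) ≤ ENNReal.ofReal ε) ∧
      ENNReal.ofReal (1 - δ) ≤ outProb D (A n) (Set.range hs)

/-- The list replicability number `List(H)` (`⊤` if no finite list size works). -/
noncomputable def listNumber (H : Set (X → Bool)) : ℕ∞ :=
  sInf {L : ℕ∞ | ∃ l : ℕ, L = l ∧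
    ∀ ε : ℝ, 0 < ε → ∃ A : LearningRule X, IsListLearner H A ε l}

/-- `A` is a proper learning rule for `H`: every output lies in `H`. -/
def IsProper (H : Set (X → Bool)) (A : LearningRule X) : Prop :=
  ∀ n S, ((A n S).support : Set (X → Bool)) ⊆ H

/-- `A` is a proper `(ε, L)`-list replicable learner for `H`: a proper learning rule
whose lists consist of hypotheses from `H`. -/
def IsProperListLearner (H : Set (X → Bool)) (A : LearningRule X) (ε : ℝ) (L : ℕ) : Prop :=
  IsProper H A ∧
  ∀ δ : ℝ, 0 < δ → ∃ n : ℕ, ∀ D : PMF (X × Bool), Realizable H D →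
    ∃ hs : Fin L → (X → Bool),
      (∀ ℓ, hs ℓ ∈ H) ∧
      (∀ ℓ, popLoss D (hs ℓ) ≤ ENNReal.ofReal ε) ∧
      ENNReal.ofReal (1 - δ) ≤ outProb D (A n) (Set.range hs)

/-- The proper list replicability number `List_p(H)` (`⊤` if no finite list size works). -/
noncomputable def properListNumber (H : Set (X → Bool)) : ℕ∞ :=
  sInf {L : ℕ∞ | ∃ l : ℕ, L = l ∧
    ∀ ε : ℝ, 0 < ε → ∃ A : LearningRule X, IsProperListLearner H A ε l}

/-- `H` shatters the finite set `s`. -/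
def Shatters (H : Set (X → Bool)) (s : Finset X) : Prop :=
  ∀ σ : X → Bool, ∃ h ∈ H, ∀ x ∈ s, h x = σ x

/-- The VC dimension of `H`, as an extended natural number. -/
noncomputable def VCDim (H : Set (X → Bool)) : ℕ∞ :=
  sSup {d : ℕ∞ | ∃ s : Finset X, Shatters H s ∧ d = s.card}

/-- `H` shatters a complete binary mistake tree of depth `d`: there is an assignment of
a point to every binary string (only strings of length `< d` matter) such that every
branch `σ ∈ Bool^d` is realized by some `h ∈ H`. -/
def LdimGe (H : Set (X → Bool)) (d : ℕ) : Prop :=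
  ∃ tree : List Bool → X, ∀ σ : Fin d → Bool, ∃ h ∈ H,
    ∀ j : Fin d, h (tree (List.ofFn fun i : Fin j => σ (Fin.castLE j.isLt.le i))) = σ j

/-- The Littlestone dimension of `H`, as an extended natural number. -/
noncomputable def Ldim (H : Set (X → Bool)) : ℕ∞ :=
  sSup {d : ℕ∞ | ∃ k : ℕ, d = k ∧ LdimGe H k}

/-- The projection of `H` to the finite set `s` contains a hollow star centered at some
pattern `f`: `f` is not realized by `H` on `s`, but each of the `|s|` patterns obtained
from `f` by flipping one coordinate is. -/
def HasHollowStar (H : Set (X → Bool)) (s : Finset X) : Prop :=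
  ∃ f : X → Bool,
    (¬ ∃ h ∈ H, ∀ x ∈ s, h x = f x) ∧
    ∀ x₀ ∈ s, ∃ h ∈ H, h x₀ = !(f x₀) ∧ ∀ x ∈ s, x ≠ x₀ → h x = f x

/-- The hollow star number of `H`, as an extended natural number. -/
noncomputable def HSdim (H : Set (X → Bool)) : ℕ∞ :=
  sSup {d : ℕ∞ | ∃ s : Finset X, HasHollowStar H s ∧ d = s.card}

/-- The class of `t` thresholds `τ_i : [t-1] → {±1}`, `i ∈ [t]`, where (identifying
`[t-1]` with `Fin (t-1)` and `[t]` with `Fin t` via `x ↦ x + 1`) `τ_i x = +1` iff `x ≥ i`. -/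
def thresholdClass (t : ℕ) : Set (Fin (t - 1) → Bool) :=
  {h | ∃ i : Fin t, h = fun x : Fin (t - 1) => decide ((i : ℕ) ≤ (x : ℕ))}

/-- The class of `s` singletons over `[s]`: `h_i x = +1` iff `x = i`. -/
def singletonClass (s : ℕ) : Set (Fin s → Bool) :=
  {h | ∃ i : Fin s, h = fun x => decide (x = i)}

/-- The empirical loss of `h` on the sample `S`. -/
noncomputable def empLoss {n : ℕ} (S : Sample X n) (h : X → Bool) : ℝ :=
  (Finset.univ.filter fun i => h (S i).1 ≠ (S i).2).card / n

/-- The sample `S` is consistent with `H`. -/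
def Consistent (H : Set (X → Bool)) {n : ℕ} (S : Sample X n) : Prop :=
  ∃ h ∈ H, ∀ i, h (S i).1 = (S i).2

/-- `A` is an `ε'`-empirical learner for `H`: for all large enough sample sizes, on every
sample consistent with `H` and every internal randomness, the output has empirical loss
at most `ε'`. -/
def IsEmpiricalLearner (H : Set (X → Bool)) (A : LearningRule X) (ε' : ℝ) : Prop :=
  ∃ n₀ : ℕ, ∀ n > n₀, ∀ S : Sample X n, Consistent H S →
    ∀ f ∈ (A n S).support, empLoss S f ≤ ε'

/-- An instability witness of size `k` for `H` with respect to the output class `F`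
(`true` encodes the label `+1` and `false` the label `-1`). -/
def IsInstabilityWitness (H F : Set (X → Bool)) (k : ℕ)
    (W : Fin k × Bool → X × Bool) : Prop :=
  (∃ xy : X × Bool, ∀ σ : Fin k → Bool, ∃ h ∈ H, h xy.1 = xy.2 ∧
      ∀ j : Fin k, W (j, σ j) ≠ xy ∧ h (W (j, σ j)).1 = (W (j, σ j)).2) ∧
  (∃ F' : Fin (k + 1) → Set (X → Bool),
      (∀ i, F' i ⊆ F) ∧
      (∀ f ∈ F, ∃! i, f ∈ F' i) ∧
      (∀ j : Fin k, ∀ f₀ ∈ F' 0, f₀ (W (j, false)).1 ≠ (W (j, false)).2) ∧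
      (∀ j : Fin k, ∀ f ∈ F' j.succ, f (W (j, true)).1 ≠ (W (j, true)).2))

/-- The total variation distance between two distributions over a countable set. -/
noncomputable def tvDist {α : Type*} (p q : PMF α) : ℝ :=
  (∑' a, |(p a).toReal - (q a).toReal|) / 2

end Replicability

/-!
(⇒) Run an `(ε, l)`-list learner `A` with confidence `δ₀ = 1/(4(l+1))` at its sample size `n`
and colour `D` by the most likely output of `A` on `n` i.i.d. samples from `D`. This mode has
mass at least `(1 - δ₀)/(l + 1)`, whereas an output outside the list of `D` has mass at most `δ₀`
under `D`. As `n`-sample distributions are at total variation at most `n · TV(D, D')`, output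
masses under `D` and `D'` differ by at most `2nδ`; for `δ` small the colour of every `D'` in the
`δ`-ball around `D` therefore lies in the list of `D`.

(⇐) Output the colour of the empirical distribution of the sample. Chebyshev's inequality for
the squared deviations of the counts shows that it is `η`-close to `D` in total variation with
high probability; it is realizable since `H` is finite, so that some hypothesis has zero loss
on `D` and hence on the sample. The outputs thus lie among the colours of the `η`-ball around
`D`: at most `L` predictors, each `ε`-accurate for `D` because losses move by at most `2η`.
-/

open Finset

namespace ENNReal

theorem le_add_ofReal_abs_toReal_sub {x y : ℝ≥0∞} (hx : x ≠ ⊤) (hy : y ≠ ⊤) :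
    y ≤ x + ENNReal.ofReal |x.toReal - y.toReal| :=
  calc y = ENNReal.ofReal (x.toReal + (y.toReal - x.toReal)) := by
        rw [add_sub_cancel, ofReal_toReal hy]
    _ ≤ ENNReal.ofReal (x.toReal + |x.toReal - y.toReal|) := by
        gcongr
        exact abs_sub_comm x.toReal y.toReal ▸ le_abs_self _
    _ ≤ _ := ofReal_add_le.trans_eq (by rw [ofReal_toReal hx])

end ENNReal

namespace Finset

theorem exists_fin_range_eq {α : Type*} {T : Finset α} (hT : T.Nonempty) {L : ℕ} (hL : T.card ≤ L) :
    ∃ f : Fin L → α, Set.range f = T := by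
  have : Nonempty T := hT.to_subtype
  let e : T ↪ Fin L := T.equivFin.toEmbedding.trans (Fin.castLEEmb hL)
  refine ⟨Subtype.val ∘ Function.invFun e, ?_⟩
  rw [Set.range_comp, (Function.invFun_surjective e.injective).range_eq, Set.image_univ,
    Subtype.range_coe]

end Finset

namespace PMF

variable {α : Type*}

theorem toOuterMeasure_le_one (p : PMF α) (s : Set α) : p.toOuterMeasure s ≤ 1 :=
  (p.toOuterMeasure.mono (Set.subset_univ s)).trans_eq
    ((p.toOuterMeasure_apply_eq_one_iff Set.univ).2 (Set.subset_univ _))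

theorem toOuterMeasure_add_compl (p : PMF α) (s : Set α) :
    p.toOuterMeasure s + p.toOuterMeasure sᶜ = 1 := by
  classical
  rw [toOuterMeasure_apply, toOuterMeasure_apply, ← ENNReal.tsum_add, ← p.tsum_coe]
  exact tsum_congr fun a => by by_cases h : a ∈ s <;> simp [h]

theorem toOuterMeasure_compl_le_ofReal {p : PMF α} {s : Set α} {δ : ℝ}
    (h : ENNReal.ofReal (1 - δ) ≤ p.toOuterMeasure s) :
    p.toOuterMeasure sᶜ ≤ ENNReal.ofReal δ := by
  rw [← ENNReal.add_le_add_iff_left (ne_top_of_le_ne_top ENNReal.one_ne_top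
    (p.toOuterMeasure_le_one s)), toOuterMeasure_add_compl]
  calc (1 : ℝ≥0∞) = ENNReal.ofReal (1 - δ + δ) := by simp
    _ ≤ ENNReal.ofReal (1 - δ) + ENNReal.ofReal δ := ENNReal.ofReal_add_le
    _ ≤ p.toOuterMeasure s + ENNReal.ofReal δ := by gcongr

theorem ofReal_one_sub_le_toOuterMeasure {p : PMF α} {s : Set α} {δ : ℝ} (hδ : 0 ≤ δ)
    (h : p.toOuterMeasure sᶜ ≤ ENNReal.ofReal δ) :
    ENNReal.ofReal (1 - δ) ≤ p.toOuterMeasure s := by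
  rw [ENNReal.ofReal_sub _ hδ, ENNReal.ofReal_one, ← toOuterMeasure_add_compl p s]
  exact tsub_le_iff_right.2 (by gcongr)

section Fintype

variable [Fintype α]

theorem sum_coe (D : PMF α) : ∑ a, D a = 1 :=
  (tsum_fintype (⇑D)).symm.trans D.tsum_coe

theorem sum_toReal (D : PMF α) : ∑ a, (D a).toReal = 1 := by
  rw [← ENNReal.toReal_sum fun a _ => D.apply_ne_top a, D.sum_coe, ENNReal.toReal_one]

theorem toOuterMeasure_setOf_lt_le (p : PMF α) {g : α → ℝ} (hg : 0 ≤ g) {t : ℝ}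
    (ht : 0 < t) :
    p.toOuterMeasure {x | t < g x} ≤ ENNReal.ofReal ((∑ x, (p x).toReal * g x) / t) := by
  rw [toOuterMeasure_apply_fintype, sum_div, ENNReal.ofReal_sum_of_nonneg fun x _ =>
    div_nonneg (mul_nonneg ENNReal.toReal_nonneg (hg x)) ht.le]
  refine sum_le_sum fun x _ => ?_
  by_cases hx : t < g x
  · rw [Set.indicator_of_mem (show x ∈ {x | t < g x} from hx),
      ← ENNReal.ofReal_toReal (p.apply_ne_top x)]
    refine ENNReal.ofReal_le_ofReal ?_
    rw [ENNReal.toReal_ofReal ENNReal.toReal_nonneg, le_div_iff₀ ht]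
    exact mul_le_mul_of_nonneg_left hx.le ENNReal.toReal_nonneg
  · rw [Set.indicator_of_notMem (show x ∉ {x | t < g x} from hx)]
    exact zero_le

noncomputable def mode (p : PMF α) : α :=
  (univ.exists_max_image p ⟨_, mem_univ p.support_nonempty.some⟩).choose

theorem apply_le_apply_mode (p : PMF α) (a : α) : p a ≤ p p.mode :=
  (univ.exists_max_image p ⟨_, mem_univ p.support_nonempty.some⟩).choose_spec.2 a (mem_univ a)

theorem toOuterMeasure_finset_le_card_mul (p : PMF α) (T : Finset α) :
    p.toOuterMeasure T ≤ T.card * p p.mode := by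
  rw [toOuterMeasure_apply_finset, ← nsmul_eq_mul, ← sum_const]
  exact sum_le_sum fun a _ => p.apply_le_apply_mode a

theorem ofReal_div_le_apply_mode {p : PMF α} {T : Finset α} {r : ℝ} {l : ℕ} (hT : T.card ≤ l)
    (h : ENNReal.ofReal r ≤ p.toOuterMeasure T) : ENNReal.ofReal (r / l) ≤ p p.mode := by
  rcases Nat.eq_zero_or_pos l with rfl | hl
  · simp
  rw [ENNReal.ofReal_div_of_pos (by exact_mod_cast hl), ENNReal.ofReal_natCast]
  refine ENNReal.div_le_of_le_mul ?_
  calc ENNReal.ofReal r ≤ T.card * p p.mode := h.trans (p.toOuterMeasure_finset_le_card_mul T)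
    _ ≤ p p.mode * l := by rw [mul_comm]; gcongr

end Fintype

end PMF

section ProductWeights

variable {Z : Type*} [Fintype Z]

theorem sum_fin_succ_pi {M : Type*} [AddCommMonoid M] {n : ℕ} (F : (Fin (n + 1) → Z) → M) :
    ∑ S, F S = ∑ a, ∑ T : Fin n → Z, F (Fin.cons a T) := by
  rw [← Fintype.sum_prod_type']
  exact (Fintype.sum_equiv (Fin.consEquiv fun _ => Z) _ _ fun _ => rfl).symm

theorem sum_abs_prod_sub_prod_le {q q' : Z → ℝ} (hq : 0 ≤ q) (hq' : 0 ≤ q')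
    (hq1 : ∑ z, q z = 1) (hq1' : ∑ z, q' z = 1) (n : ℕ) :
    ∑ S : Fin n → Z, |∏ i, q (S i) - ∏ i, q' (S i)| ≤ n * ∑ z, |q z - q' z| := by
  induction n with
  | zero => simp
  | succ n ih =>
    have hsplit : ∀ a (T : Fin n → Z),
        |q a * ∏ i, q (T i) - q' a * ∏ i, q' (T i)| ≤
          q a * |∏ i, q (T i) - ∏ i, q' (T i)| + |q a - q' a| * ∏ i, q' (T i) := by
      intro a T
      calc _ = |q a * (∏ i, q (T i) - ∏ i, q' (T i)) + (q a - q' a) * ∏ i, q' (T i)| := by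
            ring_nf
        _ ≤ _ := by
            refine (abs_add_le _ _).trans_eq ?_
            rw [abs_mul, abs_mul, abs_of_nonneg (hq a),
              abs_of_nonneg (prod_nonneg fun i _ => hq' (T i))]
    have hprod' : ∑ T : Fin n → Z, ∏ i, q' (T i) = 1 := by
      rw [← Fintype.sum_pow, hq1', one_pow]
    calc ∑ S : Fin (n + 1) → Z, |∏ i, q (S i) - ∏ i, q' (S i)|
        = ∑ a, ∑ T : Fin n → Z, |q a * ∏ i, q (T i) - q' a * ∏ i, q' (T i)| := by
          simp only [sum_fin_succ_pi, Fin.prod_univ_succ, Fin.cons_zero, Fin.cons_succ]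
      _ ≤ ∑ a, ∑ T : Fin n → Z,
            (q a * |∏ i, q (T i) - ∏ i, q' (T i)| + |q a - q' a| * ∏ i, q' (T i)) := by
          gcongr with a _ T _
          exact hsplit a T
      _ = ∑ T : Fin n → Z, |∏ i, q (T i) - ∏ i, q' (T i)| + ∑ z, |q z - q' z| := by
          simp only [sum_add_distrib, ← mul_sum, ← sum_mul, hq1, hprod', one_mul, mul_one]
      _ ≤ (n + 1 : ℕ) * ∑ z, |q z - q' z| := by
          push_cast
          linarith

theorem sum_prod_mul_sq_sum_eq {q : Z → ℝ} (Y : Z → ℝ) (hq1 : ∑ z, q z = 1)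
    (hY : ∑ z, q z * Y z = 0) (n : ℕ) :
    ∑ S : Fin n → Z, (∏ i, q (S i)) * (∑ i, Y (S i)) ^ 2 = n * ∑ z, q z * Y z ^ 2 := by
  induction n with
  | zero => simp
  | succ n ih =>
    have hprod : ∑ T : Fin n → Z, ∏ i, q (T i) = 1 := by
      rw [← Fintype.sum_pow, hq1, one_pow]
    have hexpand : ∀ a (T : Fin n → Z),
        q a * (∏ i, q (T i)) * (Y a + ∑ i, Y (T i)) ^ 2 =
          q a * Y a ^ 2 * (∏ i, q (T i)) + 2 * (q a * Y a) * ((∏ i, q (T i)) * ∑ i, Y (T i))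
            + q a * ((∏ i, q (T i)) * (∑ i, Y (T i)) ^ 2) := fun a T => by ring
    simp only [sum_fin_succ_pi, Fin.prod_univ_succ, Fin.sum_univ_succ, Fin.cons_zero,
      Fin.cons_succ, hexpand, sum_add_distrib, ← mul_sum, ← sum_mul, hprod, hY, ih, hq1]
    push_cast
    ring

theorem sum_prod_mul_sq_card_sub_le [DecidableEq Z] {q : Z → ℝ} (hq : 0 ≤ q)
    (hq1 : ∑ z, q z = 1) (n : ℕ) (z : Z) :
    ∑ S : Fin n → Z, (∏ i, q (S i)) * ((#{i | S i = z} : ℝ) - n * q z) ^ 2 ≤ n := by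
  set Y : Z → ℝ := fun x => (if x = z then 1 else 0) - q z
  have hqz : q z ≤ 1 := hq1 ▸ single_le_sum (fun x _ => hq x) (mem_univ z)
  have hqz₀ : 0 ≤ q z := hq z
  have hY : ∑ x, q x * Y x = 0 := by
    simp [Y, mul_sub, sum_sub_distrib, ← sum_mul, hq1]
  have hY2 : ∑ x, q x * Y x ^ 2 ≤ 1 := by
    refine le_of_le_of_eq (sum_le_sum fun x _ => ?_) hq1
    refine mul_le_of_le_one_right (hq x) ?_
    rw [sq_le_one_iff_abs_le_one, abs_le]
    by_cases hx : x = z <;> simp only [Y, hx, if_true, if_false] <;> constructor <;>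
      linarith
  have hcount : ∀ S : Fin n → Z, (#{i | S i = z} : ℝ) - n * q z = ∑ i, Y (S i) := by
    intro S
    simp [Y, sum_sub_distrib, sum_boole]
  simp only [hcount, sum_prod_mul_sq_sum_eq Y hq1 hY n]
  exact mul_le_of_le_one_right n.cast_nonneg hY2

end ProductWeights

namespace Replicability

variable {X : Type*}

section

variable {α β : Type*}

theorem tvDist_comm (p q : PMF α) : tvDist p q = tvDist q p := by
  simp only [tvDist, abs_sub_comm]

theorem tvDist_self (p : PMF α) : tvDist p p = 0 := by
  simp [tvDist]

section Finite

variable [Fintype α]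

theorem two_mul_tvDist (p q : PMF α) :
    2 * tvDist p q = ∑ a, |(p a).toReal - (q a).toReal| := by
  rw [tvDist, tsum_fintype]
  ring

theorem toOuterMeasure_bind_le_add_tvDist (p q : PMF α) (f : α → PMF β) (s : Set β) :
    (q.bind f).toOuterMeasure s ≤
      (p.bind f).toOuterMeasure s + ENNReal.ofReal (2 * tvDist p q) := by
  rw [two_mul_tvDist, PMF.toOuterMeasure_bind_apply, PMF.toOuterMeasure_bind_apply,
    tsum_fintype, tsum_fintype, ENNReal.ofReal_sum_of_nonneg fun _ _ => abs_nonneg _,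
    ← sum_add_distrib]
  refine sum_le_sum fun a _ => ?_
  calc q a * (f a).toOuterMeasure s
      ≤ (p a + ENNReal.ofReal |(p a).toReal - (q a).toReal|) * (f a).toOuterMeasure s := by
        gcongr
        exact ENNReal.le_add_ofReal_abs_toReal_sub (p.apply_ne_top a) (q.apply_ne_top a)
    _ ≤ p a * (f a).toOuterMeasure s + ENNReal.ofReal |(p a).toReal - (q a).toReal| * 1 := by
        rw [add_mul]
        gcongr
        exact (f a).toOuterMeasure_le_one s
    _ = _ := by rw [mul_one]

theorem toOuterMeasure_le_add_tvDist (p q : PMF α) (s : Set α) :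
    q.toOuterMeasure s ≤ p.toOuterMeasure s + ENNReal.ofReal (2 * tvDist p q) := by
  simpa only [PMF.bind_pure] using toOuterMeasure_bind_le_add_tvDist p q PMF.pure s

noncomputable def samplePMF (D : PMF α) (n : ℕ) : PMF (Fin n → α) :=
  PMF.ofFintype (fun S => ∏ i, D (S i)) (by
    rw [← Fintype.sum_pow, D.sum_coe, one_pow])

theorem samplePMF_apply (D : PMF α) (n : ℕ) (S : Fin n → α) :
    samplePMF D n S = ∏ i, D (S i) :=
  rfl

theorem tvDist_samplePMF_le (D D' : PMF α) (n : ℕ) :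
    tvDist (samplePMF D n) (samplePMF D' n) ≤ n * tvDist D D' := by
  rw [← mul_le_mul_iff_right₀ (zero_lt_two' ℝ), mul_left_comm, two_mul_tvDist,
    two_mul_tvDist]
  simpa only [samplePMF_apply, ENNReal.toReal_prod] using
    sum_abs_prod_sub_prod_le (fun z => ENNReal.toReal_nonneg) (fun z => ENNReal.toReal_nonneg)
      D.sum_toReal D'.sum_toReal n

theorem apply_mem_support_of_mem_support_samplePMF {D : PMF α} {n : ℕ}
    {S : Fin n → α} (hS : S ∈ (samplePMF D n).support) (i : Fin n) : S i ∈ D.support := by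
  rw [PMF.mem_support_iff, samplePMF_apply, prod_ne_zero_iff] at hS
  exact hS i (mem_univ i)

theorem toOuterMeasure_bind_samplePMF_le (D D' : PMF α) (n : ℕ)
    (A : (Fin n → α) → PMF β) (s : Set β) :
    ((samplePMF D' n).bind A).toOuterMeasure s ≤
      ((samplePMF D n).bind A).toOuterMeasure s + ENNReal.ofReal (2 * n * tvDist D D') := by
  refine (toOuterMeasure_bind_le_add_tvDist (samplePMF D n) _ A s).trans ?_
  refine add_le_add le_rfl (ENNReal.ofReal_le_ofReal ?_)
  rw [mul_assoc]
  exact mul_le_mul_of_nonneg_left (tvDist_samplePMF_le D D' n) zero_le_two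

theorem mem_of_ofReal_le_bind_samplePMF {n : ℕ} (Φ : (Fin n → α) → PMF β)
    {D D' : PMF α} {T : Set β} {b : β} {δ₀ δ r : ℝ} (hδ₀ : 0 ≤ δ₀) (hδ : 0 ≤ δ)
    (hT : ENNReal.ofReal (1 - δ₀) ≤ ((samplePMF D n).bind Φ).toOuterMeasure T)
    (hb : ENNReal.ofReal r ≤ (samplePMF D' n).bind Φ b) (htv : tvDist D D' ≤ δ)
    (hgap : δ₀ + 2 * n * δ < r) : b ∈ T := by
  by_contra hbT
  have hlight : (samplePMF D n).bind Φ b ≤ ENNReal.ofReal δ₀ := by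
    rw [← PMF.toOuterMeasure_apply_singleton]
    exact ((PMF.toOuterMeasure _).mono (Set.singleton_subset_iff.2 hbT)).trans
      (PMF.toOuterMeasure_compl_le_ofReal hT)
  have hclose := toOuterMeasure_bind_samplePMF_le D D' n Φ {b}
  simp only [PMF.toOuterMeasure_apply_singleton] at hclose
  have : ENNReal.ofReal r ≤ ENNReal.ofReal (δ₀ + 2 * n * δ) :=
    calc ENNReal.ofReal r ≤ (samplePMF D n).bind Φ b + ENNReal.ofReal (2 * n * tvDist D D') :=
          hb.trans hclose
      _ ≤ ENNReal.ofReal δ₀ + ENNReal.ofReal (2 * n * δ) := by gcongr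
      _ = _ := (ENNReal.ofReal_add hδ₀ (by positivity)).symm
  rw [ENNReal.ofReal_le_ofReal_iff (by positivity)] at this
  exact this.not_gt hgap

end Finite

section Empirical

variable {n : ℕ} [NeZero n]

noncomputable def empirical (S : Fin n → α) : PMF α :=
  (PMF.uniformOfFintype (Fin n)).map S

theorem empirical_apply [DecidableEq α] (S : Fin n → α) (a : α) :
    empirical S a = #{i | S i = a} / n := by
  rw [empirical, PMF.map_apply, tsum_fintype]
  simp [PMF.uniformOfFintype_apply, eq_comm, sum_ite, div_eq_mul_inv]

theorem support_empirical (S : Fin n → α) : (empirical S).support = Set.range S := by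
  simp [empirical, PMF.support_map]

theorem two_mul_mul_tvDist_empirical [Fintype α] [DecidableEq α] (D : PMF α)
    (S : Fin n → α) :
    2 * n * tvDist D (empirical S) = ∑ a, |(#{i | S i = a} : ℝ) - n * (D a).toReal| := by
  have hn : (0 : ℝ) < n := by exact_mod_cast Nat.pos_of_ne_zero (NeZero.ne n)
  rw [mul_right_comm, two_mul_tvDist, sum_mul]
  refine sum_congr rfl fun a _ => ?_
  rw [empirical_apply, ENNReal.toReal_div, ENNReal.toReal_natCast, ENNReal.toReal_natCast,
    abs_sub_comm, ← abs_of_pos hn, ← abs_mul, abs_of_pos hn, sub_mul, div_mul_cancel₀ _ hn.ne',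
    mul_comm]

theorem sq_two_mul_mul_tvDist_empirical_le [Fintype α] [DecidableEq α] (D : PMF α)
    (S : Fin n → α) :
    (2 * n * tvDist D (empirical S)) ^ 2 ≤
      Fintype.card α * ∑ a, ((#{i | S i = a} : ℝ) - n * (D a).toReal) ^ 2 := by
  rw [two_mul_mul_tvDist_empirical]
  simpa only [sq_abs, card_univ] using sq_sum_le_card_mul_sum_sq (s := univ)
    (f := fun a => |(#{i | S i = a} : ℝ) - n * (D a).toReal|)

end Empirical

theorem exists_sampleSize_tvDist_empirical_le [Fintype α] {η δ : ℝ} (hη : 0 < η)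
    (hδ : 0 < δ) :
    ∃ n : ℕ, ∀ D : PMF α, ENNReal.ofReal (1 - δ) ≤
      (samplePMF D (n + 1)).toOuterMeasure {S | tvDist D (empirical S) ≤ η} := by
  classical
  set K : ℝ := (Fintype.card α : ℝ)
  obtain ⟨n, hn⟩ := exists_nat_gt (K ^ 2 / (4 * η ^ 2 * δ))
  refine ⟨n, fun D => PMF.ofReal_one_sub_le_toOuterMeasure hδ.le ?_⟩
  set N : ℕ := n + 1
  have hN : (0 : ℝ) < N := N.cast_pos.2 n.succ_pos
  have hK : 0 < K := Nat.cast_pos.2 (Fintype.card_pos_iff.2 ⟨D.support_nonempty.some⟩)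
  set Q : (Fin N → α) → ℝ := fun S => ∑ a, ((#{i | S i = a} : ℝ) - N * (D a).toReal) ^ 2
  set t : ℝ := (2 * N * η) ^ 2 / K
  have hbad : {S | tvDist D (empirical S) ≤ η}ᶜ ⊆ {S | t < Q S} := by
    intro S hS
    have hlt : 2 * N * η < 2 * N * tvDist D (empirical S) := by
      gcongr
      exact not_le.1 hS
    show (2 * N * η) ^ 2 / K < Q S
    rw [div_lt_iff₀' hK]
    exact (pow_lt_pow_left₀ hlt (by positivity) two_ne_zero).trans_le
      (sq_two_mul_mul_tvDist_empirical_le D S)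
  have hmean : ∑ S, (samplePMF D N S).toReal * Q S ≤ N * K := by
    simp only [Q, samplePMF_apply, ENNReal.toReal_prod, mul_sum]
    rw [sum_comm]
    calc _ ≤ ∑ _a : α, (N : ℝ) := sum_le_sum fun a _ =>
          sum_prod_mul_sq_card_sub_le (fun _ => ENNReal.toReal_nonneg) D.sum_toReal N a
      _ = N * K := by rw [sum_const, card_univ, nsmul_eq_mul, mul_comm]
  calc (samplePMF D N).toOuterMeasure {S | tvDist D (empirical S) ≤ η}ᶜ
      ≤ (samplePMF D N).toOuterMeasure {S | t < Q S} := (samplePMF D N).toOuterMeasure.mono hbad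
    _ ≤ ENNReal.ofReal ((∑ S, (samplePMF D N S).toReal * Q S) / t) :=
        PMF.toOuterMeasure_setOf_lt_le _ (fun S => sum_nonneg fun a _ => sq_nonneg _)
          (by positivity)
    _ ≤ ENNReal.ofReal δ := by
        refine ENNReal.ofReal_le_ofReal ((div_le_iff₀ (by positivity)).2 (hmean.trans ?_))
        have : K ^ 2 / (4 * η ^ 2 * δ) < N := hn.trans (by simp [N])
        rw [div_lt_iff₀ (by positivity)] at this
        simp only [t]
        rw [mul_div_assoc', le_div_iff₀ hK]
        nlinarith

theorem popLoss_eq_zero_iff {D : PMF (X × Bool)} {h : X → Bool} :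
    popLoss D h = 0 ↔ ∀ z ∈ D.support, h z.1 = z.2 := by
  simp [popLoss, PMF.toOuterMeasure_apply_eq_zero_iff, Set.disjoint_left]

theorem Realizable.exists_popLoss_eq_zero [Finite X] {H : Set (X → Bool)}
    {D : PMF (X × Bool)} (hD : Realizable H D) : ∃ h ∈ H, popLoss D h = 0 := by
  obtain ⟨h₁, hh₁, -⟩ := hD 1 one_pos
  obtain ⟨h, hh, hmin⟩ := H.exists_min_image (popLoss D) H.toFinite ⟨h₁, hh₁⟩
  refine ⟨h, hh, by_contra fun hne => ?_⟩
  obtain ⟨h', hh', hlt⟩ := hD _ (pos_iff_ne_zero.2 hne)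
  exact (hmin h' hh').not_gt hlt

theorem realizable_empirical [Fintype X] {H : Set (X → Bool)} {D : PMF (X × Bool)}
    (hD : Realizable H D) {n : ℕ} [NeZero n] {S : Sample X n}
    (hS : S ∈ (samplePMF D n).support) : Realizable H (empirical S) := by
  obtain ⟨h, hh, hloss⟩ := hD.exists_popLoss_eq_zero
  have hconsistent : popLoss (empirical S) h = 0 := by
    rw [popLoss_eq_zero_iff, support_empirical]
    rintro _ ⟨i, rfl⟩
    exact popLoss_eq_zero_iff.1 hloss _ (apply_mem_support_of_mem_support_samplePMF hS i)
  exact fun ε hε => ⟨h, hh, hconsistent ▸ hε⟩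

theorem popLoss_le_of_tvDist_le [Fintype X] {D D' : PMF (X × Bool)} {h : X → Bool}
    {ε η : ℝ} (hloss : popLoss D' h ≤ ENNReal.ofReal ε) (htv : tvDist D D' ≤ η) :
    popLoss D h ≤ ENNReal.ofReal ε + ENNReal.ofReal (2 * η) := by
  calc popLoss D h ≤ popLoss D' h + ENNReal.ofReal (2 * tvDist D' D) :=
        toOuterMeasure_le_add_tvDist D' D _
    _ ≤ _ := by
        rw [tvDist_comm]
        gcongr

theorem outProb_eq_toOuterMeasure_bind [Fintype X] (D : PMF (X × Bool)) {n : ℕ}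
    (A : Sample X n → PMF (X → Bool)) (E : Set (X → Bool)) :
    outProb D A E = ((samplePMF D n).bind A).toOuterMeasure E := by
  rw [PMF.toOuterMeasure_bind_apply]
  rfl

theorem IsListLearner.exists_finset [Fintype X] {H : Set (X → Bool)} {A : LearningRule X}
    {ε : ℝ} {l : ℕ} (hA : IsListLearner H A ε l) {δ₀ : ℝ} (hδ₀ : 0 < δ₀) :
    ∃ n, ∀ D, Realizable H D → ∃ T : Finset (X → Bool), T.card ≤ l ∧
      (∀ f ∈ T, popLoss D f ≤ ENNReal.ofReal ε) ∧
      ENNReal.ofReal (1 - δ₀) ≤ ((samplePMF D n).bind (A n)).toOuterMeasure T := by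
  classical
  obtain ⟨n, hn⟩ := hA δ₀ hδ₀
  refine ⟨n, fun D hD => ?_⟩
  obtain ⟨hs, hloss, hprob⟩ := hn D hD
  refine ⟨univ.image hs, card_image_le.trans (card_fin l).le, ?_, ?_⟩
  · simp only [mem_image, mem_univ, true_and, forall_exists_index, forall_apply_eq_imp_iff]
    exact hloss
  · rwa [coe_image, coe_univ, Set.image_univ, ← outProb_eq_toOuterMeasure_bind]

theorem exists_coloring_of_isListLearner [Fintype X] {H : Set (X → Bool)}
    {A : LearningRule X} {ε : ℝ} {l : ℕ} (hA : IsListLearner H A ε l) :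
    ∃ δ : ℝ, 0 < δ ∧ ∃ c : PMF (X × Bool) → (X → Bool),
      (∀ D, Realizable H D → popLoss D (c D) ≤ ENNReal.ofReal ε) ∧
      (∀ D, Realizable H D → ∃ T : Finset (X → Bool), T.card ≤ l ∧
          ∀ D', Realizable H D' → tvDist D D' ≤ δ → c D' ∈ T) := by
  classical
  set δ₀ : ℝ := 1 / (4 * (l + 1))
  have hδ₀ : 0 < δ₀ := by positivity
  obtain ⟨n, hlist⟩ := hA.exists_finset hδ₀
  set δ : ℝ := δ₀ / (n + 1)
  have hδ : 0 < δ := by positivity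
  have hgap : δ₀ + 2 * n * δ < (1 - δ₀) / (l + 1 : ℕ) := by
    have h1 : 2 * n * δ < 2 * δ₀ := by
      rw [mul_div_assoc', div_lt_iff₀ (by positivity)]
      nlinarith
    have h2 : 3 * δ₀ ≤ (1 - δ₀) / (l + 1 : ℕ) := by
      rw [le_div_iff₀ (by positivity)]
      push_cast
      have : δ₀ * (l + 1) = 1 / 4 := by simp only [δ₀]; field_simp
      nlinarith
    linarith
  set c : PMF (X × Bool) → (X → Bool) := fun D => ((samplePMF D n).bind (A n)).mode
  have hstable : ∀ D (T : Finset (X → Bool)),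
      ENNReal.ofReal (1 - δ₀) ≤ ((samplePMF D n).bind (A n)).toOuterMeasure T →
      ∀ D', Realizable H D' → tvDist D D' ≤ δ → c D' ∈ T := by
    intro D T hT D' hD' htv
    obtain ⟨T', hT'card, -, hT'⟩ := hlist D' hD'
    exact mem_of_ofReal_le_bind_samplePMF (A n) hδ₀.le hδ.le hT
      (PMF.ofReal_div_le_apply_mode (hT'card.trans l.le_succ) hT') htv hgap
  refine ⟨δ, hδ, c, fun D hD => ?_, fun D hD => ?_⟩
  · obtain ⟨T, -, hloss, hT⟩ := hlist D hD
    exact hloss _ (hstable D T hT D hD (by rw [tvDist_self]; exact hδ.le))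
  · obtain ⟨T, hcard, -, hT⟩ := hlist D hD
    exact ⟨T, hcard, hstable D T hT⟩

noncomputable def empiricalLearner (c : PMF (X × Bool) → X → Bool) : LearningRule X
  | 0, _ => PMF.pure fun _ => true -- an empty sample has no empirical distribution
  | _ + 1, S => PMF.pure (c (empirical S))

theorem isListLearner_empiricalLearner [Fintype X] {H : Set (X → Bool)}
    {c : PMF (X × Bool) → X → Bool} {ε δ : ℝ} {L : ℕ} (hε : 0 < ε) (hδ : 0 < δ)
    (hc : ∀ D, Realizable H D → popLoss D (c D) ≤ ENNReal.ofReal (ε / 2))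
    (hball : ∀ D, Realizable H D → ∃ T : Finset (X → Bool), T.card ≤ L ∧
        ∀ D', Realizable H D' → tvDist D D' ≤ δ → c D' ∈ T) :
    IsListLearner H (empiricalLearner c) ε L := by
  classical
  intro δ₁ hδ₁
  set η := min δ (ε / 4)
  have hη : 0 < η := lt_min hδ (by positivity)
  obtain ⟨n, hn⟩ := exists_sampleSize_tvDist_empirical_le (α := X × Bool) hη hδ₁
  refine ⟨n + 1, fun D hD => ?_⟩
  obtain ⟨T, hTcard, hT⟩ := hball D hD
  set T' : Finset (X → Bool) := {f | ∃ D', Realizable H D' ∧ tvDist D D' ≤ η ∧ c D' = f}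
  have hmem : ∀ {f}, f ∈ T' ↔ ∃ D', Realizable H D' ∧ tvDist D D' ≤ η ∧ c D' = f := by
    simp [T']
  have hT'card : T'.card ≤ L := by
    refine (card_le_card fun f hf => ?_).trans hTcard
    obtain ⟨D', hD', htv, rfl⟩ := hmem.1 hf
    exact hT D' hD' (htv.trans (min_le_left _ _))
  obtain ⟨hs, hrange⟩ := exists_fin_range_eq
    ⟨c D, hmem.2 ⟨D, hD, by rw [tvDist_self]; exact hη.le, rfl⟩⟩ hT'card
  refine ⟨hs, fun ℓ => ?_, ?_⟩
  · obtain ⟨D', hD', htv, hD'ℓ⟩ :=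
      hmem.1 (hrange ▸ Set.mem_range_self ℓ : hs ℓ ∈ (T' : Set _))
    calc popLoss D (hs ℓ) ≤ ENNReal.ofReal (ε / 2) + ENNReal.ofReal (2 * η) :=
          popLoss_le_of_tvDist_le (hD'ℓ ▸ hc D' hD') htv
      _ ≤ ENNReal.ofReal (ε / 2) + ENNReal.ofReal (2 * (ε / 4)) := by
          gcongr
          exact min_le_right _ _
      _ = ENNReal.ofReal ε := by
          rw [← ENNReal.ofReal_add (by positivity) (by positivity)]
          ring_nf
  · rw [hrange, outProb_eq_toOuterMeasure_bind]
    refine (hn D).trans ?_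
    rw [show empiricalLearner c (n + 1) = PMF.pure ∘ (c ∘ empirical) from rfl,
      PMF.bind_pure_comp, PMF.toOuterMeasure_map_apply]
    refine PMF.toOuterMeasure_mono _ ?_
    rintro S ⟨hS, hSsupp⟩
    exact hmem.2 ⟨empirical S, realizable_empirical hD hSsupp, hS, rfl⟩

theorem exists_isListLearner_of_listNumber_le {H : Set (X → Bool)} {L : ℕ}
    (h : listNumber H ≤ L) : ∃ l ≤ L, ∀ ε : ℝ, 0 < ε → ∃ A, IsListLearner H A ε l := by
  obtain ⟨_, ⟨l, rfl, hA⟩, hlt⟩ :=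
    sInf_lt_iff.1 (h.trans_lt (ENat.natCast_lt_natCast.2 L.lt_succ_self))
  exact ⟨l, Nat.lt_succ_iff.1 (by exact_mod_cast hlt), hA⟩

end

/-- for a finite class `H`, `List(H) ≤ L` iff for every `ε > 0` the space of
realizable distributions admits an `ε`-accurate coloring in which every total-variation
`δ`-ball of realizable distributions receives at most `L` colors. -/
theorem stmt_8 {X : Type*} [Fintype X] (H : Set (X → Bool)) (L : ℕ) :
    listNumber H ≤ (L : ℕ∞) ↔
    ∀ ε : ℝ, 0 < ε → ∃ δ : ℝ, 0 < δ ∧ ∃ c : PMF (X × Bool) → (X → Bool),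
      (∀ D : PMF (X × Bool), Realizable H D → popLoss D (c D) ≤ ENNReal.ofReal ε) ∧
      (∀ D : PMF (X × Bool), Realizable H D →
        ∃ T : Finset (X → Bool), T.card ≤ L ∧
          ∀ D' : PMF (X × Bool), Realizable H D' → tvDist D D' ≤ δ → c D' ∈ T) := by
  constructor
  · intro hle ε hε
    obtain ⟨l, hlL, hl⟩ := exists_isListLearner_of_listNumber_le hle
    obtain ⟨A, hA⟩ := hl ε hε
    obtain ⟨δ, hδ, c, hc, hball⟩ := exists_coloring_of_isListLearner hA
    exact ⟨δ, hδ, c, hc, fun D hD => (hball D hD).imp fun T hT => ⟨hT.1.trans hlL, hT.2⟩⟩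
  · intro hcolor
    refine sInf_le ⟨L, rfl, fun ε hε => ?_⟩
    obtain ⟨δ, hδ, c, hc, hball⟩ := hcolor (ε / 2) (half_pos hε)
    exact ⟨empiricalLearner c, isListLearner_empiricalLearner hε hδ hc hball⟩

end Replicability
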